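/- arXiv:1811.04598 — 3 statements merged into one kernel-verified Lean document; each statement's English description precedes it below -/
import Mathlib

section
/- Let x ∈ ℝ^N be a block vector with block structure B and weights ω_b ≥ 1, and let s ≥ ‖ω‖_∞². If x̃[S] denotes the quasi-best weighted s-block approximation of x (obtained by greedily selecting blocks in non-increasing order of ‖x[b]‖^p ω_b^{-p} until the weighted cardinality budget s is exhausted), then the quasi-best weighted 3s-block approximation error is bounded by the best weighted s-block approximation error: σ̃_{3s}(x)_{q,p}^{(ω)} ≤ σ_s(x)_{q,p}^{(ω)}. -/
open Finset

theorem stmt0 {B : ℕ} {E : Fin B → Type*} [∀ b, NormedAddCommGroup (E b)]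
    [∀ b, DecidableEq (E b)]
    (x : ∀ b, E b) (ω : Fin B → ℝ) (hω : ∀ b, 1 ≤ ω b)
    (p q s : ℝ) (hp : 0 < p) (hq : 0 < q)
    (hs : ∀ b, ω b ^ 2 ≤ s)
    -- `T` is the block support of the quasi-best weighted `3s`-block approximation of `x`:
    -- it consists of blocks with the largest values of `‖x[b]‖^p ω_b^{-p}` (equivalently of
    -- `‖x[b]‖/ω_b`), has weighted cardinality at most `3s`, and is maximal with this property.
    (T : Finset (Fin B))
    (hT1 : ∀ b ∈ T, ∀ b' ∉ T, ‖x b'‖ ^ p * (ω b') ^ (-p) ≤ ‖x b‖ ^ p * (ω b) ^ (-p))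
    (hT2 : (∑ b ∈ T, ω b ^ 2) ≤ 3 * s)
    (hT3 : ∀ b' ∉ T, (∀ b'' ∉ T, ‖x b''‖ ^ p * (ω b'') ^ (-p) ≤ ‖x b'‖ ^ p * (ω b') ^ (-p)) →
      3 * s < (∑ b ∈ T, ω b ^ 2) + ω b' ^ 2) :
    -- the quasi-best weighted 3s-block approximation error is at most the best weighted
    -- s-block approximation error:  σ̃_{3s}(x)_{q,p}^{(ω)} ≤ σ_s(x)_{q,p}^{(ω)}
    (∑ b ∈ Tᶜ, ω b ^ (2 - p) * ‖x b‖ ^ p) ^ (1 / p) ≤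
      sInf {t : ℝ | ∃ z : ∀ b, E b,
        (∑ b ∈ Finset.univ.filter (fun b => z b ≠ 0), ω b ^ 2) ≤ s ∧
        t = (∑ b, ω b ^ (2 - p) * ‖x b - z b‖ ^ p) ^ (1 / p)} := by
  have hωpos : ∀ b, (0:ℝ) < ω b := fun b => lt_of_lt_of_le one_pos (hω b)
  set v : Fin B → ℝ := fun b => ‖x b‖ ^ p * (ω b) ^ (-p) with hv
  have hvnonneg : ∀ b, 0 ≤ v b := by
    intro b
    exact mul_nonneg (Real.rpow_nonneg (norm_nonneg _) _)
      (Real.rpow_nonneg (hωpos b).le _)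
  have hfv : ∀ b, ω b ^ (2 - p) * ‖x b‖ ^ p = ω b ^ 2 * v b := by
    intro b
    have h2 : (ω b : ℝ) ^ ((2:ℝ) - p) = ω b ^ (2:ℝ) * ω b ^ (-p) := by
      rw [← Real.rpow_add (hωpos b)]; ring_nf
    have h3 : (ω b : ℝ) ^ (2:ℝ) = ω b ^ 2 := by
      rw [show ((2:ℝ)) = ((2:ℕ):ℝ) by norm_num, Real.rpow_natCast]
    rw [h2, h3, hv]; ring
  -- key inequality for any admissible z
  have key : ∀ t ∈ {t : ℝ | ∃ z : ∀ b, E b,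
        (∑ b ∈ Finset.univ.filter (fun b => z b ≠ 0), ω b ^ 2) ≤ s ∧
        t = (∑ b, ω b ^ (2 - p) * ‖x b - z b‖ ^ p) ^ (1 / p)},
      (∑ b ∈ Tᶜ, ω b ^ (2 - p) * ‖x b‖ ^ p) ^ (1 / p) ≤ t := by
    rintro t ⟨z, hz, rfl⟩
    have hsum : (∑ b ∈ Tᶜ, ω b ^ (2 - p) * ‖x b‖ ^ p) ≤
        ∑ b, ω b ^ (2 - p) * ‖x b - z b‖ ^ p := by
      classical
      set S := Finset.univ.filter (fun b => z b ≠ 0) with hSdef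
      set f : Fin B → ℝ := fun b => ω b ^ (2 - p) * ‖x b‖ ^ p with hf
      set g : Fin B → ℝ := fun b => ω b ^ (2 - p) * ‖x b - z b‖ ^ p with hg
      have hfnonneg : ∀ b, 0 ≤ f b := fun b =>
        mul_nonneg (Real.rpow_nonneg (hωpos b).le _) (Real.rpow_nonneg (norm_nonneg _) _)
      have hgnonneg : ∀ b, 0 ≤ g b := fun b =>
        mul_nonneg (Real.rpow_nonneg (hωpos b).le _) (Real.rpow_nonneg (norm_nonneg _) _)
      have hfg : ∀ b ∉ S, f b = g b := by
        intro b hb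
        have : z b = 0 := by simpa [hSdef] using hb
        simp [hf, hg, this]
      -- split sums
      have hL : ∑ b ∈ Tᶜ, f b = ∑ b ∈ Tᶜ ∩ S, f b + ∑ b ∈ Tᶜ \ S, f b :=
        (Finset.sum_inter_add_sum_sdiff Tᶜ S f).symm
      have hR : ∑ b ∈ Sᶜ, g b + ∑ b ∈ S, g b = ∑ b, g b := by
        rw [add_comm]; exact Finset.sum_add_sum_compl S g
      have hRf : ∑ b ∈ Sᶜ, g b = ∑ b ∈ Sᶜ, f b := by
        apply Finset.sum_congr rfl
        intro b hb
        exact (hfg b (by simpa using hb)).symm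
      have hSc : ∑ b ∈ Sᶜ, f b = ∑ b ∈ Sᶜ ∩ T, f b + ∑ b ∈ Sᶜ \ T, f b :=
        (Finset.sum_inter_add_sum_sdiff Sᶜ T f).symm
      have hset1 : Sᶜ \ T = Tᶜ \ S := by
        ext b; simp [Finset.mem_sdiff]; tauto
      have hset2 : Sᶜ ∩ T = T \ S := by
        ext b; simp [Finset.mem_sdiff, Finset.mem_inter]; tauto
      -- core: ∑_{Tᶜ∩S} f ≤ ∑_{T\S} f
      have core : ∑ b ∈ Tᶜ ∩ S, f b ≤ ∑ b ∈ T \ S, f b := by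
        rcases (Tᶜ ∩ S).eq_empty_or_nonempty with hA | hA
        · rw [hA]
          simp only [Finset.sum_empty]
          exact Finset.sum_nonneg fun b _ => hfnonneg b
        · obtain ⟨b₀, hb₀⟩ := hA
          have hb₀T : b₀ ∉ T := by
            have := Finset.mem_of_mem_inter_left hb₀
            simpa using this
          -- Tᶜ nonempty, get max of v on Tᶜ
          have hTc : (Tᶜ : Finset (Fin B)).Nonempty := ⟨b₀, by simpa using hb₀T⟩
          obtain ⟨bm, hbm, hbmax⟩ := Finset.exists_max_image Tᶜ v hTc
          have hbmT : bm ∉ T := by simpa using hbm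
          have h3s : 3 * s < (∑ b ∈ T, ω b ^ 2) + ω bm ^ 2 := by
            apply hT3 bm hbmT
            intro b'' hb''
            exact hbmax b'' (by simpa using hb'')
          have hωT : 2 * s < ∑ b ∈ T, ω b ^ 2 := by
            have := hs bm
            linarith
          have hωS : (∑ b ∈ S, ω b ^ 2) ≤ s := hz
          have hωTS : (∑ b ∈ T ∩ S, ω b ^ 2) ≤ s := by
            refine le_trans ?_ hωS
            apply Finset.sum_le_sum_of_subset_of_nonneg (Finset.inter_subset_right)
            intro b _ _; positivity
          have hsplitT : (∑ b ∈ T ∩ S, ω b ^ 2) + (∑ b ∈ T \ S, ω b ^ 2)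
              = ∑ b ∈ T, ω b ^ 2 := Finset.sum_inter_add_sum_sdiff T S _
          have hωC : s < ∑ b ∈ T \ S, ω b ^ 2 := by linarith
          have hspos : 0 < s := lt_of_lt_of_le (by nlinarith [hω b₀]) (hs b₀)
          have hCne : (T \ S).Nonempty := by
            rcases (T \ S).eq_empty_or_nonempty with h | h
            · exfalso; rw [h] at hωC; simp at hωC; linarith
            · exact h
          obtain ⟨b₁, hb₁, hbmin⟩ := Finset.exists_min_image (T \ S) v hCne
          have hb₁T : b₁ ∈ T := (Finset.mem_sdiff.mp hb₁).1
          have hμ : 0 ≤ v b₁ := hvnonneg b₁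
          have hωA : (∑ b ∈ Tᶜ ∩ S, ω b ^ 2) ≤ s := by
            refine le_trans ?_ hωS
            apply Finset.sum_le_sum_of_subset_of_nonneg (Finset.inter_subset_right)
            intro b _ _; positivity
          calc ∑ b ∈ Tᶜ ∩ S, f b = ∑ b ∈ Tᶜ ∩ S, ω b ^ 2 * v b := by
                apply Finset.sum_congr rfl; intro b _; exact hfv b
            _ ≤ ∑ b ∈ Tᶜ ∩ S, ω b ^ 2 * v b₁ := by
                apply Finset.sum_le_sum
                intro b hb
                have hbT : b ∉ T := by
                  have := Finset.mem_of_mem_inter_left hb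
                  simpa using this
                exact mul_le_mul_of_nonneg_left (hT1 b₁ hb₁T b hbT) (by positivity)
            _ = (∑ b ∈ Tᶜ ∩ S, ω b ^ 2) * v b₁ := by rw [Finset.sum_mul]
            _ ≤ (∑ b ∈ T \ S, ω b ^ 2) * v b₁ := by
                apply mul_le_mul_of_nonneg_right _ hμ
                linarith
            _ = ∑ b ∈ T \ S, ω b ^ 2 * v b₁ := by rw [Finset.sum_mul]
            _ ≤ ∑ b ∈ T \ S, ω b ^ 2 * v b := by
                apply Finset.sum_le_sum
                intro b hb
                exact mul_le_mul_of_nonneg_left (hbmin b hb) (by positivity)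
            _ = ∑ b ∈ T \ S, f b := by
                apply Finset.sum_congr rfl; intro b _; exact (hfv b).symm
      have hSg : 0 ≤ ∑ b ∈ S, g b := Finset.sum_nonneg fun b _ => hgnonneg b
      calc ∑ b ∈ Tᶜ, f b = ∑ b ∈ Tᶜ ∩ S, f b + ∑ b ∈ Tᶜ \ S, f b := hL
        _ ≤ ∑ b ∈ T \ S, f b + ∑ b ∈ Tᶜ \ S, f b := by linarith
        _ = ∑ b ∈ Sᶜ ∩ T, f b + ∑ b ∈ Sᶜ \ T, f b := by rw [hset1, hset2]
        _ = ∑ b ∈ Sᶜ, f b := hSc.symm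
        _ = ∑ b ∈ Sᶜ, g b := hRf.symm
        _ ≤ ∑ b ∈ Sᶜ, g b + ∑ b ∈ S, g b := by linarith
        _ = ∑ b, g b := hR
    apply Real.rpow_le_rpow _ hsum (by positivity)
    apply Finset.sum_nonneg
    intro b _
    exact mul_nonneg (Real.rpow_nonneg (hωpos b).le _) (Real.rpow_nonneg (norm_nonneg _) _)
  rcases Set.eq_empty_or_nonempty {t : ℝ | ∃ z : ∀ b, E b,
        (∑ b ∈ Finset.univ.filter (fun b => z b ≠ 0), ω b ^ 2) ≤ s ∧
        t = (∑ b, ω b ^ (2 - p) * ‖x b - z b‖ ^ p) ^ (1 / p)} with h | h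
  · -- empty set: Fin B must be empty
    have hB : IsEmpty (Fin B) := by
      by_contra h'
      rw [not_isEmpty_iff] at h'
      obtain ⟨b⟩ := h'
      have hmem : ((∑ b, ω b ^ (2 - p) * ‖x b - (0 : ∀ b, E b) b‖ ^ p) ^ (1 / p)) ∈
          {t : ℝ | ∃ z : ∀ b, E b,
            (∑ b ∈ Finset.univ.filter (fun b => z b ≠ 0), ω b ^ 2) ≤ s ∧
            t = (∑ b, ω b ^ (2 - p) * ‖x b - z b‖ ^ p) ^ (1 / p)} := by
        refine ⟨0, ?_, rfl⟩
        have h1 : (0:ℝ) ≤ s := le_trans (by nlinarith [hω b]) (hs b)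
        simpa using h1
      rw [h] at hmem
      exact hmem
    rw [h, Real.sInf_empty]
    have : (Tᶜ : Finset (Fin B)) = ∅ := Finset.eq_empty_of_isEmpty _
    rw [this, Finset.sum_empty, Real.zero_rpow (by positivity)]
  · exact le_csInf h key
end

section
/- Let x ∈ ℝ^N be a block vector with weights ω_i ≥ 1 and let s > ‖ω‖_∞² denote a weighted sparsity level. Then for q < p ≤ 2 and any norm r on the blocks, the weighted block Stechkin bound holds: σ_s(x)_{r,p}^{(ω)} ≤ σ̃_s(x)_{r,p}^{(ω)} ≤ (s − ‖ω‖_∞²)^{1/p − 1/q} ‖x‖_{r,q}^{(ω)}. -/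
/-!
With `u_b = ‖x[b]‖ / ω_b` and `v_b = ω_b²` one has `Σ_b ω_b^{2-t} ‖x[b]‖^t = Σ_b v_b u_b^t`.
Let `α` be the largest `u_b` outside the greedy support `S`. Every block in `S` has `u_b ≥ α`,
and since the block realising `α` did not fit, `v(S) > s - ‖ω‖_∞²`; hence
`α^q (s - ‖ω‖_∞²) ≤ ‖x‖_q^q`. Outside `S` one has `u_b^p ≤ α^{p-q} u_b^q`, so the tail satisfies
`σ̃_s(x)_p^p ≤ α^{p-q} ‖x‖_q^q`, and eliminating `α` gives the bound. The truncation of `x` to `S`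
is itself an admissible `s`-block approximation, which gives `σ_s ≤ σ̃_s`.
-/

open Finset Real

lemma rpow_two_sub_mul_rpow {w a : ℝ} (hw : 0 < w) (ha : 0 ≤ a) (t : ℝ) :
    w ^ (2 - t) * a ^ t = w ^ 2 * (a / w) ^ t := by
  rw [div_rpow ha hw.le, rpow_sub hw, rpow_two]
  field_simp

lemma sInf_le_sum_compl_rpow {ι : Type*} [Fintype ι] [DecidableEq ι] {E : ι → Type*}
    [∀ b, NormedAddCommGroup (E b)] [∀ b, DecidableEq (E b)] (x : ∀ b, E b) {ω : ι → ℝ}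
    (hω : ∀ b, 0 ≤ ω b) {p s : ℝ} (hp : p ≠ 0) {S : Finset ι} (hS : ∑ b ∈ S, ω b ^ 2 ≤ s) :
    sInf {t : ℝ | ∃ z : ∀ b, E b,
        (∑ b ∈ univ.filter (fun b => z b ≠ 0), ω b ^ 2) ≤ s ∧
        t = (∑ b, ω b ^ (2 - p) * ‖x b - z b‖ ^ p) ^ (1 / p)} ≤
      (∑ b ∈ Sᶜ, ω b ^ (2 - p) * ‖x b‖ ^ p) ^ (1 / p) := by
  refine csInf_le ⟨0, ?_⟩ ⟨S.piecewise x 0, ?_, ?_⟩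
  · rintro _ ⟨z, -, rfl⟩
    exact rpow_nonneg (sum_nonneg fun b _ =>
      mul_nonneg (rpow_nonneg (hω b) _) (rpow_nonneg (norm_nonneg _) _)) _
  · refine le_trans (sum_le_sum_of_subset_of_nonneg (fun b hb => ?_) fun b _ _ => sq_nonneg _) hS
    by_contra hbS
    exact (mem_filter.1 hb).2 (S.piecewise_eq_of_notMem _ _ hbS)
  · have hS_zero : ∀ b ∈ S, ω b ^ (2 - p) * ‖x b - S.piecewise x 0 b‖ ^ p = 0 := fun b hb => by
      rw [S.piecewise_eq_of_mem _ _ hb, sub_self, norm_zero, zero_rpow hp, mul_zero]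
    rw [← sum_compl_add_sum S, sum_eq_zero hS_zero, add_zero]
    refine congrArg (· ^ (1 / p)) (sum_congr rfl fun b hb => ?_)
    rw [S.piecewise_eq_of_notMem _ _ (mem_compl.1 hb), Pi.zero_apply, sub_zero]

lemma rpow_one_div_le_of_le_rpow_sub_mul {A Q α c p q : ℝ} (hA : 0 ≤ A) (hα : 0 ≤ α)
    (hc : 0 < c) (hq : 0 < q) (hqp : q ≤ p) (hαQ : α ^ q * c ≤ Q) (hAα : A ≤ α ^ (p - q) * Q) :
    A ^ (1 / p) ≤ c ^ (1 / p - 1 / q) * Q ^ (1 / q) := by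
  have hp : 0 < p := hq.trans_le hqp
  have hQ : 0 ≤ Q := (by positivity : 0 ≤ α ^ q * c).trans hαQ
  set β := (Q / c) ^ q⁻¹ with hβ_def
  have hβ : 0 ≤ β := by positivity
  have hβq : β ^ q = Q / c := rpow_inv_rpow (div_nonneg hQ hc.le) hq.ne'
  have hαβ : α ≤ β := by
    rw [← rpow_le_rpow_iff hα hβ hq, hβq, le_div_iff₀ hc]
    exact hαQ
  have hAβ : A ≤ β ^ p * c :=
    calc A ≤ α ^ (p - q) * Q := hAα
      _ ≤ β ^ (p - q) * Q := by gcongr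
      _ = β ^ (p - q) * β ^ q * c := by rw [hβq, mul_assoc, div_mul_cancel₀ _ hc.ne']
      _ = β ^ p * c := by rw [← rpow_add' hβ (by simpa using hp.ne'), sub_add_cancel]
  calc A ^ (1 / p) ≤ (β ^ p * c) ^ (1 / p) := by gcongr
    _ = β * c ^ (1 / p) := by
      rw [mul_rpow (by positivity) hc.le, one_div, rpow_rpow_inv hβ hp.ne']
    _ = c ^ (1 / p - 1 / q) * Q ^ (1 / q) := by
      rw [hβ_def, div_rpow hQ hc.le, rpow_sub hc, one_div, one_div]
      field_simp

section Stechkin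

variable {ι : Type*} [Fintype ι] {u v : ι → ℝ} {S : Finset ι} {α p q : ℝ}

lemma rpow_mul_sum_le_sum_mul_rpow (hu : ∀ b, 0 ≤ u b) (hv : ∀ b, 0 ≤ v b) (hα : 0 ≤ α)
    (hq : 0 ≤ q) (hS : ∀ b ∈ S, α ≤ u b) : α ^ q * ∑ b ∈ S, v b ≤ ∑ b, v b * u b ^ q := by
  rw [mul_sum]
  calc ∑ b ∈ S, α ^ q * v b ≤ ∑ b ∈ S, v b * u b ^ q :=
        sum_le_sum fun b hb => by
          rw [mul_comm]
          exact mul_le_mul_of_nonneg_left (rpow_le_rpow hα (hS b hb) hq) (hv b)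
    _ ≤ ∑ b, v b * u b ^ q :=
        sum_le_sum_of_subset_of_nonneg (subset_univ S) fun b _ _ =>
          mul_nonneg (hv b) (rpow_nonneg (hu b) q)

lemma sum_compl_mul_rpow_le [DecidableEq ι] (hu : ∀ b, 0 ≤ u b) (hv : ∀ b, 0 ≤ v b)
    (hα : 0 ≤ α) (hqp : q ≤ p) (hp : p ≠ 0) (hSc : ∀ b ∉ S, u b ≤ α) :
    ∑ b ∈ Sᶜ, v b * u b ^ p ≤ α ^ (p - q) * ∑ b, v b * u b ^ q := by
  rw [mul_sum]
  calc ∑ b ∈ Sᶜ, v b * u b ^ p ≤ ∑ b ∈ Sᶜ, α ^ (p - q) * (v b * u b ^ q) :=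
        sum_le_sum fun b hb => by
          have hsplit : u b ^ p = u b ^ q * u b ^ (p - q) := by
            rw [← rpow_add' (hu b) (by rwa [add_sub_cancel]), add_sub_cancel]
          have hle : u b ^ (p - q) ≤ α ^ (p - q) :=
            rpow_le_rpow (hu b) (hSc b (mem_compl.1 hb)) (sub_nonneg.2 hqp)
          calc v b * u b ^ p = u b ^ (p - q) * (v b * u b ^ q) := by rw [hsplit]; ring
            _ ≤ α ^ (p - q) * (v b * u b ^ q) :=
              mul_le_mul_of_nonneg_right hle (mul_nonneg (hv b) (rpow_nonneg (hu b) q))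
    _ ≤ ∑ b, α ^ (p - q) * (v b * u b ^ q) :=
        sum_le_sum_of_subset_of_nonneg (subset_univ _) fun b _ _ =>
          mul_nonneg (rpow_nonneg hα _) (mul_nonneg (hv b) (rpow_nonneg (hu b) q))

theorem stechkin_bound [DecidableEq ι] (hu : ∀ b, 0 ≤ u b) (hv : ∀ b, 0 ≤ v b) (hα : 0 ≤ α)
    (hS : ∀ b ∈ S, α ≤ u b) (hSc : ∀ b ∉ S, u b ≤ α) {c : ℝ} (hc : 0 < c)
    (hcS : c ≤ ∑ b ∈ S, v b) (hq : 0 < q) (hqp : q ≤ p) :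
    (∑ b ∈ Sᶜ, v b * u b ^ p) ^ (1 / p) ≤ c ^ (1 / p - 1 / q) * (∑ b, v b * u b ^ q) ^ (1 / q) :=
  rpow_one_div_le_of_le_rpow_sub_mul
    (sum_nonneg fun b _ => mul_nonneg (hv b) (rpow_nonneg (hu b) p)) hα hc hq hqp
    ((mul_le_mul_of_nonneg_left hcS (rpow_nonneg hα q)).trans
      (rpow_mul_sum_le_sum_mul_rpow hu hv hα hq.le hS))
    (sum_compl_mul_rpow_le hu hv hα hqp (hq.trans_le hqp).ne' hSc)

end Stechkin

theorem stmt1_general {B : ℕ} {E : Fin B → Type*} [∀ b, NormedAddCommGroup (E b)]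
    [∀ b, DecidableEq (E b)]
    (x : ∀ b, E b) (ω : Fin B → ℝ) (hω : ∀ b, 1 ≤ ω b)
    (p q s W : ℝ) (h0q : 0 < q) (hqp : q < p)
    (hW : IsGreatest (Set.range ω) W)      -- `W = ‖ω‖_∞`
    (hs : W ^ 2 < s)
    -- `S` is the block support of the quasi-best weighted `s`-block approximation of `x`,
    -- chosen greedily from the non-increasing rearrangement of `‖x[b]‖/ω_b`
    -- subject to `ω(S) ≤ s`:
    (S : Finset (Fin B))
    (hS1 : ∀ b ∈ S, ∀ b' ∉ S, ‖x b'‖ / ω b' ≤ ‖x b‖ / ω b)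
    (hS2 : (∑ b ∈ S, ω b ^ 2) ≤ s)
    (hS3 : ∀ b' ∉ S, (∀ b'' ∉ S, ‖x b''‖ / ω b'' ≤ ‖x b'‖ / ω b') →
      s < (∑ b ∈ S, ω b ^ 2) + ω b' ^ 2) :
    -- σ_s(x)_{r,p}^{(ω)} ≤ σ̃_s(x)_{r,p}^{(ω)} ≤ (s − ‖ω‖_∞²)^{1/p−1/q} ‖x‖_{r,q}^{(ω)}
    sInf {t : ℝ | ∃ z : ∀ b, E b,
        (∑ b ∈ Finset.univ.filter (fun b => z b ≠ 0), ω b ^ 2) ≤ s ∧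
        t = (∑ b, ω b ^ (2 - p) * ‖x b - z b‖ ^ p) ^ (1 / p)} ≤
      (∑ b ∈ Sᶜ, ω b ^ (2 - p) * ‖x b‖ ^ p) ^ (1 / p) ∧
    (∑ b ∈ Sᶜ, ω b ^ (2 - p) * ‖x b‖ ^ p) ^ (1 / p) ≤
      (s - W ^ 2) ^ (1 / p - 1 / q) * (∑ b, ω b ^ (2 - q) * ‖x b‖ ^ q) ^ (1 / q) := by
  have hp : 0 < p := h0q.trans hqp
  have hωpos : ∀ b, 0 < ω b := fun b => one_pos.trans_le (hω b)
  refine ⟨sInf_le_sum_compl_rpow x (fun b => (hωpos b).le) hp.ne' hS2, ?_⟩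
  have hc : 0 < s - W ^ 2 := sub_pos.2 hs
  have hu : ∀ b, 0 ≤ ‖x b‖ / ω b := fun b => div_nonneg (norm_nonneg _) (hωpos b).le
  simp only [rpow_two_sub_mul_rpow (hωpos _) (norm_nonneg _)]
  rcases Sᶜ.eq_empty_or_nonempty with hSc | hSc
  · rw [hSc, sum_empty, zero_rpow (one_div_pos.2 hp).ne']
    exact mul_nonneg (rpow_nonneg hc.le _) (rpow_nonneg (sum_nonneg fun b _ =>
      mul_nonneg (sq_nonneg _) (rpow_nonneg (hu b) _)) _)
  obtain ⟨b₀, hb₀, hmax⟩ := Sᶜ.exists_max_image (fun b => ‖x b‖ / ω b) hSc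
  rw [mem_compl] at hb₀
  have hmax' : ∀ b ∉ S, ‖x b‖ / ω b ≤ ‖x b₀‖ / ω b₀ := fun b hb => hmax b (mem_compl.2 hb)
  have hcS : s - W ^ 2 ≤ ∑ b ∈ S, ω b ^ 2 := by
    have hfull := hS3 b₀ hb₀ hmax'
    have hωW : ω b₀ ^ 2 ≤ W ^ 2 := pow_le_pow_left₀ (hωpos b₀).le (hW.2 ⟨b₀, rfl⟩) 2
    linarith
  exact stechkin_bound hu (fun b => sq_nonneg _) (hu b₀) (fun b hb => hS1 b hb b₀ hb₀) hmax'
    hc hcS h0q hqp.le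

theorem stmt1 {B : ℕ} {E : Fin B → Type*} [∀ b, NormedAddCommGroup (E b)]
    [∀ b, DecidableEq (E b)]
    (x : ∀ b, E b) (ω : Fin B → ℝ) (hω : ∀ b, 1 ≤ ω b)
    (p q s W : ℝ) (h0q : 0 < q) (hqp : q < p) (hp2 : p ≤ 2)
    (hW : IsGreatest (Set.range ω) W)      -- `W = ‖ω‖_∞`
    (hs : W ^ 2 < s)
    -- `S` is the block support of the quasi-best weighted `s`-block approximation of `x`,
    -- chosen greedily from the non-increasing rearrangement of `‖x[b]‖/ω_b`
    -- subject to `ω(S) ≤ s`: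
    (S : Finset (Fin B))
    (hS1 : ∀ b ∈ S, ∀ b' ∉ S, ‖x b'‖ / ω b' ≤ ‖x b‖ / ω b)
    (hS2 : (∑ b ∈ S, ω b ^ 2) ≤ s)
    (hS3 : ∀ b' ∉ S, (∀ b'' ∉ S, ‖x b''‖ / ω b'' ≤ ‖x b'‖ / ω b') →
      s < (∑ b ∈ S, ω b ^ 2) + ω b' ^ 2) :
    -- σ_s(x)_{r,p}^{(ω)} ≤ σ̃_s(x)_{r,p}^{(ω)} ≤ (s − ‖ω‖_∞²)^{1/p−1/q} ‖x‖_{r,q}^{(ω)}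
    sInf {t : ℝ | ∃ z : ∀ b, E b,
        (∑ b ∈ Finset.univ.filter (fun b => z b ≠ 0), ω b ^ 2) ≤ s ∧
        t = (∑ b, ω b ^ (2 - p) * ‖x b - z b‖ ^ p) ^ (1 / p)} ≤
      (∑ b ∈ Sᶜ, ω b ^ (2 - p) * ‖x b‖ ^ p) ^ (1 / p) ∧
    (∑ b ∈ Sᶜ, ω b ^ (2 - p) * ‖x b‖ ^ p) ^ (1 / p) ≤
      (s - W ^ 2) ^ (1 / p - 1 / q) * (∑ b, ω b ^ (2 - q) * ‖x b‖ ^ q) ^ (1 / q) :=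
  stmt1_general x ω hω p q s W h0q hqp hW hs S hS1 hS2 hS3
end

section
/- Given 1 ≤ p ≤ q ≤ 2, suppose A ∈ ℝ^{m×N} satisfies the ℓ_ω^q-BRNSP of order s ≥ ‖ω‖_∞² with constants 0 < ρ < 1 and τ > 0. Then for any x, z ∈ ℝ^N: ‖z − x‖_{2,p}^{(ω)} ≤ (C_ρ/s^{1−1/p})(‖z‖_{2,1}^{(ω)} − ‖x‖_{2,1}^{(ω)} + 2σ_s(x)_{2,1}^{(ω)}) + (D_{ρ,τ}/s^{1/q−1/p})‖A(z−x)‖₂, where C_ρ = (1+ρ)²/(1−ρ) and D_{ρ,τ} = τ(3+ρ)/(1−ρ). -/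
open Finset

noncomputable def l2 {n : Type*} [Fintype n] (v : n → ℝ) : ℝ := Real.sqrt (∑ i, (v i) ^ 2)

variable {B : ℕ} {d : Fin B → ℕ}

/-- ℓ² norm of the block `b` of the block vector `x`. -/
noncomputable def bn (x : ((b : Fin B) × Fin (d b)) → ℝ) (b : Fin B) : ℝ :=
  Real.sqrt (∑ i : Fin (d b), (x ⟨b, i⟩) ^ 2)

/-- Weighted block ℓ¹ norm `‖x‖_{2,1}^{(ω)}`. -/
noncomputable def n21 (ω : Fin B → ℝ) (x : ((b : Fin B) × Fin (d b)) → ℝ) : ℝ :=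
  ∑ b, ω b * bn x b

/-- Weighted block (2,p) norm `‖x‖_{2,p}^{(ω)}` (real exponents). -/
noncomputable def n2p (ω : Fin B → ℝ) (p : ℝ) (x : ((b : Fin B) × Fin (d b)) → ℝ) : ℝ :=
  (∑ b, ω b ^ (2 - p) * bn x b ^ p) ^ (1 / p)

/-- Restriction of `x` to the blocks in `S` (zero outside). -/
def rs (S : Finset (Fin B)) (x : ((b : Fin B) × Fin (d b)) → ℝ) :
    ((b : Fin B) × Fin (d b)) → ℝ :=
  fun j => if j.1 ∈ S then x j else 0

/-- Weighted cardinality `ω(S) = ∑_{b∈S} ω_b²`. -/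
def wCard (ω : Fin B → ℝ) (S : Finset (Fin B)) : ℝ := ∑ b ∈ S, ω b ^ 2

/-- Weighted block sparsity `‖x‖₀^{(ω)}`. -/
noncomputable def wspar (ω : Fin B → ℝ) (x : ((b : Fin B) × Fin (d b)) → ℝ) : ℝ :=
  ∑ b, if bn x b = 0 then 0 else ω b ^ 2

/-- Best weighted `s`-block approximation error in the `‖·‖_{2,1}^{(ω)}` norm. -/
noncomputable def sigmaS (ω : Fin B → ℝ) (s : ℝ) (x : ((b : Fin B) × Fin (d b)) → ℝ) : ℝ :=
  sInf {t | ∃ z, wspar ω z ≤ s ∧ t = n21 ω (x - z)}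

/-- Weighted block restricted isometry property of order `t` with constant `δ`. -/
noncomputable def WBRIP {m : ℕ} (A : Matrix (Fin m) ((b : Fin B) × Fin (d b)) ℝ)
    (ω : Fin B → ℝ) (t δ : ℝ) : Prop :=
  ∀ x : ((b : Fin B) × Fin (d b)) → ℝ, wspar ω x ≤ t →
    (1 - δ) * l2 x ^ 2 ≤ l2 (A.mulVec x) ^ 2 ∧ l2 (A.mulVec x) ^ 2 ≤ (1 + δ) * l2 x ^ 2

/-! With `w_b = ω_b ^ 2` and `f_b = ‖v_b‖₂ / ω_b`, the block norms become weighted sequence norms: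
`‖v‖_{2,r}^{(ω)} = (∑ w_b f_b ^ r) ^ (1 / r)` and `‖v‖_{2,1}^{(ω)} = ∑ w_b f_b`.
Hölder's inequality turns the `ℓ^q`-NSP into an `ℓ¹`-NSP with `τ` replaced by `τ s^{1-1/q}`,
which gives the classical `ℓ¹` error bound for `z - x` once it is tested on the block support
of each `s`-sparse `u` and the infimum over `u` is taken. For the `ℓ^p` bound, split the blocks
at the level `f_b > ‖v‖_{2,1}^{(ω)} / s`: by Markov's inequality this set has weight at most `s`,
so the NSP and Hölder control `v` there, while below the level a Stechkin-type estimate gives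
`s^{1/p-1} ‖v‖_{2,1}^{(ω)}`. -/

section WeightedLp

variable {ι : Type*}

noncomputable def weightedLpNorm (w f : ι → ℝ) (r : ℝ) (S : Finset ι) : ℝ :=
  (∑ i ∈ S, w i * f i ^ r) ^ (1 / r)

variable {w f : ι → ℝ}

theorem weightedLpNorm_nonneg (hw : ∀ i, 0 ≤ w i) (hf : ∀ i, 0 ≤ f i) (r : ℝ) (S : Finset ι) :
    0 ≤ weightedLpNorm w f r S :=
  Real.rpow_nonneg (sum_nonneg fun i _ => mul_nonneg (hw i) (Real.rpow_nonneg (hf i) r)) _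

theorem weightedLpNorm_one (S : Finset ι) : weightedLpNorm w f 1 S = ∑ i ∈ S, w i * f i := by
  simp [weightedLpNorm]

theorem weightedLpNorm_le_mul_rpow_sum (hw : ∀ i, 0 ≤ w i) (hf : ∀ i, 0 ≤ f i) {r t : ℝ}
    (hr : 0 < r) (hrt : r ≤ t) (S : Finset ι) :
    weightedLpNorm w f r S ≤ weightedLpNorm w f t S * (∑ i ∈ S, w i) ^ (1 / r - 1 / t) := by
  have hholder := Real.inner_le_weight_mul_Lp_of_nonneg S (p := t / r)
    (by rwa [le_div_iff₀ hr, one_mul]) w (fun i => f i ^ r) hw (fun i => Real.rpow_nonneg (hf i) r)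
  simp only [← Real.rpow_mul (hf _), mul_div_cancel₀ t hr.ne', inv_div] at hholder
  have hW : 0 ≤ ∑ i ∈ S, w i := sum_nonneg fun i _ => hw i
  have hT : 0 ≤ ∑ i ∈ S, w i * f i ^ t :=
    sum_nonneg fun i _ => mul_nonneg (hw i) (Real.rpow_nonneg (hf i) t)
  calc weightedLpNorm w f r S
      ≤ ((∑ i ∈ S, w i) ^ (1 - r / t) * (∑ i ∈ S, w i * f i ^ t) ^ (r / t)) ^ (1 / r) :=
        Real.rpow_le_rpow (sum_nonneg fun i _ => mul_nonneg (hw i) (Real.rpow_nonneg (hf i) r))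
          hholder (by positivity)
    _ = weightedLpNorm w f t S * (∑ i ∈ S, w i) ^ (1 / r - 1 / t) := by
        rw [Real.mul_rpow (Real.rpow_nonneg hW _) (Real.rpow_nonneg hT _), ← Real.rpow_mul hW,
          ← Real.rpow_mul hT, mul_comm, weightedLpNorm]
        congr 2 <;> field_simp

theorem weightedLpNorm_le_add_compl [Fintype ι] [DecidableEq ι] (hw : ∀ i, 0 ≤ w i)
    (hf : ∀ i, 0 ≤ f i) {r : ℝ} (hr : 1 ≤ r) (S : Finset ι) :
    weightedLpNorm w f r univ ≤ weightedLpNorm w f r S + weightedLpNorm w f r Sᶜ := by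
  have hsum : ∀ T : Finset ι, 0 ≤ ∑ i ∈ T, w i * f i ^ r :=
    fun T => sum_nonneg fun i _ => mul_nonneg (hw i) (Real.rpow_nonneg (hf i) r)
  rw [weightedLpNorm, ← sum_add_sum_compl S]
  exact Real.rpow_add_le_add_rpow (hsum _) (hsum _) (by positivity)
    (div_le_one_of_le₀ hr (by positivity))

theorem weightedLpNorm_le_of_forall_le_div (hw : ∀ i, 0 ≤ w i) (hf : ∀ i, 0 ≤ f i)
    {r s a : ℝ} (hr : 1 ≤ r) (hs : 0 < s) {S : Finset ι} (hfS : ∀ i ∈ S, f i ≤ a / s)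
    (ha : ∑ i ∈ S, w i * f i ≤ a) :
    weightedLpNorm w f r S ≤ s ^ (1 / r - 1) * a := by
  have ha0 : 0 ≤ a := (sum_nonneg fun i _ => mul_nonneg (hw i) (hf i)).trans ha
  have hc : 0 ≤ a / s := div_nonneg ha0 hs.le
  have hpow : ∀ {y : ℝ}, 0 ≤ y → y ^ r = y * y ^ (r - 1) := fun hy => by
    rw [← Real.rpow_one_add' hy (by linarith), add_sub_cancel]
  have hterm : ∀ i ∈ S, w i * f i ^ r ≤ (a / s) ^ (r - 1) * (w i * f i) := fun i hi =>
    calc w i * f i ^ r = (w i * f i) * f i ^ (r - 1) := by rw [hpow (hf i)]; ring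
      _ ≤ (w i * f i) * (a / s) ^ (r - 1) :=
        mul_le_mul_of_nonneg_left (Real.rpow_le_rpow (hf i) (hfS i hi) (by linarith))
          (mul_nonneg (hw i) (hf i))
      _ = (a / s) ^ (r - 1) * (w i * f i) := mul_comm _ _
  calc weightedLpNorm w f r S ≤ ((a / s) ^ (r - 1) * a) ^ (1 / r) := by
        refine Real.rpow_le_rpow
          (sum_nonneg fun i _ => mul_nonneg (hw i) (Real.rpow_nonneg (hf i) r)) ?_ (by positivity)
        exact (sum_le_sum hterm).trans (by rw [← mul_sum]; gcongr)
    _ = ((a / s) ^ r * s) ^ (1 / r) := by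
        rw [hpow hc]
        field_simp
    _ = s ^ (1 / r - 1) * a := by
        rw [Real.mul_rpow (Real.rpow_nonneg hc _) hs.le, ← Real.rpow_mul hc,
          mul_one_div_cancel (by linarith), Real.rpow_one, Real.rpow_sub hs, Real.rpow_one]
        field_simp

theorem sum_filter_div_lt_le [Fintype ι] (hw : ∀ i, 0 < w i) (hf : ∀ i, 0 ≤ f i) {s : ℝ}
    (hs : 0 < s) : ∑ i with (∑ j, w j * f j) / s < f i, w i ≤ s := by
  set a := ∑ j, w j * f j
  have hwf : ∀ i, 0 ≤ w i * f i := fun i => mul_nonneg (hw i).le (hf i)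
  have ha0 : 0 ≤ a := sum_nonneg fun i _ => hwf i
  rcases ha0.eq_or_lt with ha | ha
  · have hf0 : ∀ i, f i = 0 := fun i => by
      have := (sum_eq_zero_iff_of_nonneg fun i _ => hwf i).mp ha.symm i (mem_univ i)
      simpa [(hw i).ne'] using this
    simp [hf0, not_lt.mpr (div_nonneg ha0 hs.le), hs.le]
  · have markov : a / s * ∑ i with a / s < f i, w i ≤ a :=
      calc a / s * ∑ i with a / s < f i, w i = ∑ i with a / s < f i, w i * (a / s) := by
            rw [mul_sum]; simp only [mul_comm]
        _ ≤ ∑ i with a / s < f i, w i * f i :=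
            sum_le_sum fun i hi => by gcongr; exacts [(hw i).le, (mem_filter.mp hi).2.le]
        _ ≤ a := sum_le_sum_of_subset_of_nonneg (subset_univ _) fun i _ _ => hwf i
    rw [div_mul_eq_mul_div, div_le_iff₀ hs] at markov
    exact le_of_mul_le_mul_left markov ha

theorem sum_mul_le_of_weightedLpNorm_le [DecidableEq ι] [Fintype ι] (hw : ∀ i, 0 ≤ w i)
    (hf : ∀ i, 0 ≤ f i) {q s ρ η : ℝ} (hq : 1 ≤ q) (hs : 0 < s) {T : Finset ι}
    (hT : ∑ i ∈ T, w i ≤ s)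
    (hnsp : weightedLpNorm w f q T ≤ ρ / s ^ (1 - 1 / q) * ∑ i ∈ Tᶜ, w i * f i + η) :
    ∑ i ∈ T, w i * f i ≤ ρ * ∑ i ∈ Tᶜ, w i * f i + s ^ (1 - 1 / q) * η := by
  calc ∑ i ∈ T, w i * f i
      ≤ weightedLpNorm w f q T * (∑ i ∈ T, w i) ^ (1 - 1 / q) := by
        simpa [weightedLpNorm_one] using weightedLpNorm_le_mul_rpow_sum hw hf one_pos hq T
    _ ≤ weightedLpNorm w f q T * s ^ (1 - 1 / q) := by
        gcongr
        · exact weightedLpNorm_nonneg hw hf q T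
        · exact sum_nonneg fun i _ => hw i
        · rw [sub_nonneg, div_le_one (by linarith)]; exact hq
    _ ≤ (ρ / s ^ (1 - 1 / q) * ∑ i ∈ Tᶜ, w i * f i + η) * s ^ (1 - 1 / q) := by gcongr
    _ = ρ * ∑ i ∈ Tᶜ, w i * f i + s ^ (1 - 1 / q) * η := by field_simp

theorem weightedLpNorm_univ_le_of_lq_nsp [DecidableEq ι] [Fintype ι] (hw : ∀ i, 0 < w i)
    (hf : ∀ i, 0 ≤ f i) {p q s ρ η : ℝ} (hp : 1 ≤ p) (hpq : p ≤ q) (hs : 0 < s) (hρ : 0 ≤ ρ)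
    (hnsp : ∀ S : Finset ι, ∑ i ∈ S, w i ≤ s →
      weightedLpNorm w f q S ≤ ρ / s ^ (1 - 1 / q) * ∑ i ∈ Sᶜ, w i * f i + η) :
    weightedLpNorm w f p univ ≤
      (1 + ρ) * s ^ (1 / p - 1) * ∑ i, w i * f i + s ^ (1 / p - 1 / q) * η := by
  set a := ∑ i, w i * f i
  set S : Finset ι := {i | a / s < f i}
  have hw0 : ∀ i, 0 ≤ w i := fun i => (hw i).le
  have hsum_le : ∀ T : Finset ι, ∑ i ∈ T, w i * f i ≤ a := fun T =>
    sum_le_sum_of_subset_of_nonneg (subset_univ _) fun i _ _ => mul_nonneg (hw0 i) (hf i)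
  have hS : ∑ i ∈ S, w i ≤ s := sum_filter_div_lt_le hw hf hs
  have head : weightedLpNorm w f p S ≤ ρ * s ^ (1 / p - 1) * a + s ^ (1 / p - 1 / q) * η :=
    calc weightedLpNorm w f p S ≤ weightedLpNorm w f q S * (∑ i ∈ S, w i) ^ (1 / p - 1 / q) :=
          weightedLpNorm_le_mul_rpow_sum hw0 hf (by linarith) hpq S
      _ ≤ (ρ / s ^ (1 - 1 / q) * a + η) * s ^ (1 / p - 1 / q) := by
          have hG : weightedLpNorm w f q S ≤ ρ / s ^ (1 - 1 / q) * a + η :=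
            (hnsp S hS).trans (by gcongr; exact hsum_le _)
          have hexp : 0 ≤ 1 / p - 1 / q := by rw [sub_nonneg]; gcongr
          exact mul_le_mul hG (Real.rpow_le_rpow (sum_nonneg fun i _ => hw0 i) hS hexp)
            (Real.rpow_nonneg (sum_nonneg fun i _ => hw0 i) _)
            ((weightedLpNorm_nonneg hw0 hf q S).trans hG)
      _ = ρ * s ^ (1 / p - 1) * a + s ^ (1 / p - 1 / q) * η := by
          rw [show 1 / p - 1 / q = (1 / p - 1) + (1 - 1 / q) by ring, Real.rpow_add hs]
          field_simp
  have tail : weightedLpNorm w f p Sᶜ ≤ s ^ (1 / p - 1) * a :=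
    weightedLpNorm_le_of_forall_le_div hw0 hf hp hs
      (fun i hi => by simpa [S] using hi) (hsum_le _)
  calc weightedLpNorm w f p univ ≤ weightedLpNorm w f p S + weightedLpNorm w f p Sᶜ :=
        weightedLpNorm_le_add_compl hw0 hf hp S
    _ ≤ _ := by linarith

theorem one_sub_mul_sum_le_of_sum_le_mul_sum_compl [Fintype ι] [DecidableEq ι]
    {az ax av : ι → ℝ} {ρ κ : ℝ} (hρ : 0 ≤ ρ) (hρ1 : ρ ≤ 1)
    (hav : ∀ i, av i ≤ az i + ax i) (hax : ∀ i, ax i ≤ az i + av i) {T : Finset ι}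
    (hT : ∑ i ∈ T, av i ≤ ρ * ∑ i ∈ Tᶜ, av i + κ) :
    (1 - ρ) * ∑ i, av i ≤ (1 + ρ) * (∑ i, az i - ∑ i, ax i + 2 * ∑ i ∈ Tᶜ, ax i) + 2 * κ := by
  have hvc : ∑ i ∈ Tᶜ, av i ≤ ∑ i ∈ Tᶜ, az i + ∑ i ∈ Tᶜ, ax i := by
    rw [← sum_add_distrib]; exact sum_le_sum fun i _ => hav i
  have hxT : ∑ i ∈ T, ax i ≤ ∑ i ∈ T, az i + ∑ i ∈ T, av i := by
    rw [← sum_add_distrib]; exact sum_le_sum fun i _ => hax i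
  have hz := sum_add_sum_compl T az
  have hx := sum_add_sum_compl T ax
  have hv := sum_add_sum_compl T av
  have hcone : (1 - ρ) * ∑ i ∈ Tᶜ, av i ≤ ∑ i, az i - ∑ i, ax i + 2 * ∑ i ∈ Tᶜ, ax i + κ := by
    linarith
  rw [← hv]
  linarith [mul_le_mul_of_nonneg_left hT (by linarith : 0 ≤ 1 - ρ),
    mul_le_mul_of_nonneg_left hcone (by linarith : 0 ≤ 1 + ρ)]

end WeightedLp

theorem bn_nonneg (x : ((b : Fin B) × Fin (d b)) → ℝ) (b : Fin B) : 0 ≤ bn x b :=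
  Real.sqrt_nonneg _

theorem bn_eq_norm (x : ((b : Fin B) × Fin (d b)) → ℝ) (b : Fin B) :
    bn x b = ‖WithLp.toLp 2 (fun i => x ⟨b, i⟩)‖ := by
  simp [EuclideanSpace.norm_eq, bn]

theorem bn_add_le (x y : ((b : Fin B) × Fin (d b)) → ℝ) (b : Fin B) :
    bn (x + y) b ≤ bn x b + bn y b := by
  simp only [bn_eq_norm]
  exact norm_add_le (WithLp.toLp 2 fun i => x ⟨b, i⟩) (WithLp.toLp 2 fun i => y ⟨b, i⟩)

theorem bn_sub_le (x y : ((b : Fin B) × Fin (d b)) → ℝ) (b : Fin B) :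
    bn (x - y) b ≤ bn x b + bn y b := by
  simp only [bn_eq_norm]
  exact norm_sub_le (WithLp.toLp 2 fun i => x ⟨b, i⟩) (WithLp.toLp 2 fun i => y ⟨b, i⟩)

theorem bn_rs (S : Finset (Fin B)) (x : ((b : Fin B) × Fin (d b)) → ℝ) (b : Fin B) :
    bn (rs S x) b = if b ∈ S then bn x b else 0 := by
  by_cases hb : b ∈ S <;> simp [bn, rs, hb]

theorem rs_univ (x : ((b : Fin B) × Fin (d b)) → ℝ) : rs univ x = x := by
  ext; simp [rs]

theorem n21_rs (ω : Fin B → ℝ) (S : Finset (Fin B)) (v : ((b : Fin B) × Fin (d b)) → ℝ) :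
    n21 ω (rs S v) = ∑ b ∈ S, ω b * bn v b := by
  simp [n21, bn_rs, mul_ite, sum_ite_mem]

theorem sum_sq_mul_bn_div {ω : Fin B → ℝ} (hω : ∀ b, ω b ≠ 0) (S : Finset (Fin B))
    (v : ((b : Fin B) × Fin (d b)) → ℝ) :
    ∑ b ∈ S, ω b ^ 2 * (bn v b / ω b) = ∑ b ∈ S, ω b * bn v b :=
  sum_congr rfl fun b _ => by field_simp [hω b]

theorem n2p_rs_eq_weightedLpNorm {ω : Fin B → ℝ} (hω : ∀ b, 0 < ω b) {r : ℝ} (hr : r ≠ 0)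
    (S : Finset (Fin B)) (v : ((b : Fin B) × Fin (d b)) → ℝ) :
    n2p ω r (rs S v) = weightedLpNorm (fun b => ω b ^ 2) (fun b => bn v b / ω b) r S := by
  have hterm : ∀ b, ω b ^ (2 - r) * bn v b ^ r = ω b ^ 2 * (bn v b / ω b) ^ r := fun b => by
    rw [Real.div_rpow (bn_nonneg v b) (hω b).le, Real.rpow_sub (hω b), Real.rpow_two]
    field_simp
  simp only [n2p, weightedLpNorm, bn_rs]
  congr 1
  simp [apply_ite (· ^ r), Real.zero_rpow hr, mul_ite, hterm, sum_ite_mem]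

theorem n2p_le_of_lq_nsp {ω : Fin B → ℝ} (hω : ∀ b, 0 < ω b) {p q s ρ η : ℝ} (hp : 1 ≤ p)
    (hpq : p ≤ q) (hs : 0 < s) (hρ : 0 ≤ ρ) {v : ((b : Fin B) × Fin (d b)) → ℝ}
    (hnsp : ∀ S : Finset (Fin B), wCard ω S ≤ s →
      n2p ω q (rs S v) ≤ ρ / s ^ (1 - 1 / q) * n21 ω (rs Sᶜ v) + η) :
    n2p ω p v ≤ (1 + ρ) * s ^ (1 / p - 1) * n21 ω v + s ^ (1 / p - 1 / q) * η := by
  have hω0 : ∀ b, ω b ≠ 0 := fun b => (hω b).ne'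
  have key := weightedLpNorm_univ_le_of_lq_nsp (fun b => pow_pos (hω b) 2)
    (fun b => div_nonneg (bn_nonneg v b) (hω b).le) hp hpq hs hρ fun S hS => by
      rw [← n2p_rs_eq_weightedLpNorm hω (by linarith), sum_sq_mul_bn_div hω0, ← n21_rs]
      exact hnsp S hS
  rwa [← n2p_rs_eq_weightedLpNorm hω (by linarith), sum_sq_mul_bn_div hω0, ← n21_rs,
    rs_univ] at key

theorem sum_le_of_lq_nsp {ω : Fin B → ℝ} (hω : ∀ b, 0 < ω b) {q s ρ η : ℝ} (hq : 1 ≤ q)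
    (hs : 0 < s) {v : ((b : Fin B) × Fin (d b)) → ℝ}
    (hnsp : ∀ S : Finset (Fin B), wCard ω S ≤ s →
      n2p ω q (rs S v) ≤ ρ / s ^ (1 - 1 / q) * n21 ω (rs Sᶜ v) + η)
    (T : Finset (Fin B)) (hT : wCard ω T ≤ s) :
    ∑ b ∈ T, ω b * bn v b ≤ ρ * ∑ b ∈ Tᶜ, ω b * bn v b + s ^ (1 - 1 / q) * η := by
  have hω0 : ∀ b, ω b ≠ 0 := fun b => (hω b).ne'
  have key := sum_mul_le_of_weightedLpNorm_le (fun b => (pow_pos (hω b) 2).le)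
    (fun b => div_nonneg (bn_nonneg v b) (hω b).le) hq hs hT (by
      rw [← n2p_rs_eq_weightedLpNorm hω (by linarith), sum_sq_mul_bn_div hω0, ← n21_rs]
      exact hnsp T hT)
  rwa [sum_sq_mul_bn_div hω0, sum_sq_mul_bn_div hω0] at key

noncomputable def blockSupport (u : ((b : Fin B) × Fin (d b)) → ℝ) : Finset (Fin B) :=
  {b | bn u b ≠ 0}

theorem wCard_blockSupport (ω : Fin B → ℝ) (u : ((b : Fin B) × Fin (d b)) → ℝ) :
    wCard ω (blockSupport u) = wspar ω u := by
  simp [wCard, wspar, blockSupport, sum_filter, ite_not]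

theorem sum_compl_blockSupport_le {ω : Fin B → ℝ} (hω : ∀ b, 0 ≤ ω b)
    (x u : ((b : Fin B) × Fin (d b)) → ℝ) :
    ∑ b ∈ (blockSupport u)ᶜ, ω b * bn x b ≤ n21 ω (x - u) := by
  have hbn : ∀ b ∈ (blockSupport u)ᶜ, bn x b = bn (x - u) b := fun b hb => by
    have hu : bn u b = 0 := by simpa [blockSupport] using hb
    have h1 := bn_sub_le x u b
    have h2 := bn_add_le (x - u) u b
    rw [sub_add_cancel] at h2
    linarith
  rw [sum_congr rfl fun b hb => by rw [hbn b hb]]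
  exact sum_le_sum_of_subset_of_nonneg (subset_univ _)
    fun b _ _ => mul_nonneg (hω b) (bn_nonneg _ b)

theorem le_add_mul_sigmaS_of_forall_le {ω : Fin B → ℝ} {s c α β : ℝ} (hs : 0 ≤ s) (hβ : 0 < β)
    {x : ((b : Fin B) × Fin (d b)) → ℝ}
    (h : ∀ u, wspar ω u ≤ s → c ≤ α + β * n21 ω (x - u)) : c ≤ α + β * sigmaS ω s x := by
  have hzero : wspar ω (0 : ((b : Fin B) × Fin (d b)) → ℝ) ≤ s := by simpa [wspar, bn]
  have hinf : (c - α) / β ≤ sigmaS ω s x := by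
    refine le_csInf ⟨_, 0, hzero, rfl⟩ ?_
    rintro t ⟨u, hu, rfl⟩
    rw [div_le_iff₀ hβ]
    linarith [h u hu]
  rw [div_le_iff₀ hβ] at hinf
  linarith

theorem sigmaS_of_isEmpty [IsEmpty (Fin B)] (ω : Fin B → ℝ) (s : ℝ)
    (x : ((b : Fin B) × Fin (d b)) → ℝ) : sigmaS ω s x = 0 := by
  have hset : ∀ t ∈ {t | ∃ z, wspar ω z ≤ s ∧ t = n21 ω (x - z)}, t = 0 := by
    rintro t ⟨z, -, rfl⟩
    simp [n21]
  exact le_antisymm (Real.sInf_nonpos fun t ht => (hset t ht).le)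
    (Real.sInf_nonneg fun t ht => (hset t ht).ge)

theorem one_sub_mul_n21_sub_le {ω : Fin B → ℝ} (hω : ∀ b, 0 ≤ ω b) {s ρ κ : ℝ} (hs : 0 ≤ s)
    (hρ : 0 ≤ ρ) (hρ1 : ρ ≤ 1) {x z : ((b : Fin B) × Fin (d b)) → ℝ}
    (hnsp : ∀ T : Finset (Fin B), wCard ω T ≤ s →
      ∑ b ∈ T, ω b * bn (z - x) b ≤ ρ * ∑ b ∈ Tᶜ, ω b * bn (z - x) b + κ) :
    (1 - ρ) * n21 ω (z - x) ≤ (1 + ρ) * (n21 ω z - n21 ω x + 2 * sigmaS ω s x) + 2 * κ := by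
  have hbound : ∀ u, wspar ω u ≤ s →
      (1 - ρ) * n21 ω (z - x) ≤ (1 + ρ) * (n21 ω z - n21 ω x + 2 * n21 ω (x - u)) + 2 * κ := by
    intro u hu
    have hT : wCard ω (blockSupport u) ≤ s := (wCard_blockSupport ω u).trans_le hu
    have hcone := one_sub_mul_sum_le_of_sum_le_mul_sum_compl (az := fun b => ω b * bn z b)
      (ax := fun b => ω b * bn x b) (av := fun b => ω b * bn (z - x) b) hρ hρ1
      (fun b => by rw [← mul_add]; exact mul_le_mul_of_nonneg_left (bn_sub_le z x b) (hω b))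
      (fun b => by
        rw [← mul_add]
        refine mul_le_mul_of_nonneg_left ?_ (hω b)
        simpa only [sub_sub_cancel] using bn_sub_le z (z - x) b)
      (hnsp _ hT)
    have hcompl := sum_compl_blockSupport_le hω x u
    simp only [n21] at hcompl ⊢
    linarith [mul_le_mul_of_nonneg_left hcompl (by linarith : 0 ≤ 1 + ρ)]
  have := le_add_mul_sigmaS_of_forall_le hs (by linarith : 0 < 2 * (1 + ρ))
    (x := x) (c := (1 - ρ) * n21 ω (z - x)) (α := (1 + ρ) * (n21 ω z - n21 ω x) + 2 * κ)
    fun u hu => by linarith [hbound u hu]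
  linarith

theorem stmt4_general {m : ℕ} (A : Matrix (Fin m) ((b : Fin B) × Fin (d b)) ℝ)
    (ω : Fin B → ℝ) (hω : ∀ b, 1 ≤ ω b) (s ρ τ p q : ℝ)
    (hρ0 : 0 < ρ) (hρ1 : ρ < 1)
    (hp : 1 ≤ p) (hpq : p ≤ q)
    (hs : ∀ b, ω b ^ 2 ≤ s)
    (hNSP : ∀ (v : ((b : Fin B) × Fin (d b)) → ℝ) (S : Finset (Fin B)), wCard ω S ≤ s →
      n2p ω q (rs S v) ≤ ρ / s ^ (1 - 1 / q) * n21 ω (rs Sᶜ v) + τ * l2 (A.mulVec v))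
    (x z : ((b : Fin B) × Fin (d b)) → ℝ) :
    n2p ω p (z - x) ≤
      ((1 + ρ) ^ 2 / (1 - ρ)) / s ^ (1 - 1 / p) *
          (n21 ω z - n21 ω x + 2 * sigmaS ω s x)
        + (τ * (3 + ρ) / (1 - ρ)) / s ^ (1 / q - 1 / p) * l2 (A.mulVec (z - x)) := by
  -- Without blocks `s` may be nonpositive, but then both sides vanish.
  rcases isEmpty_or_nonempty (Fin B) with hB | ⟨⟨b₀⟩⟩
  · obtain rfl : z = x := Subsingleton.elim z x
    simp [sigmaS_of_isEmpty, n2p, l2, Real.zero_rpow (inv_ne_zero (by linarith : p ≠ 0))]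
  have hωpos : ∀ b, 0 < ω b := fun b => one_pos.trans_le (hω b)
  have hs0 : 0 < s := by nlinarith [hω b₀, hs b₀]
  have hℓp := n2p_le_of_lq_nsp hωpos hp hpq hs0 hρ0.le (hNSP (z - x))
  have hℓ1 := one_sub_mul_n21_sub_le (fun b => (hωpos b).le) hs0.le hρ0.le hρ1.le
    (sum_le_of_lq_nsp hωpos (hp.trans hpq) hs0 (hNSP (z - x)))
  have hsplit : s ^ (1 / p - 1 / q) = s ^ (1 / p - 1) * s ^ (1 - 1 / q) := by
    rw [← Real.rpow_add hs0]; ring_nf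
  rw [hsplit] at hℓp
  rw [div_eq_mul_inv _ (s ^ (1 - 1 / p)), div_eq_mul_inv _ (s ^ (1 / q - 1 / p)),
    ← Real.rpow_neg hs0.le, ← Real.rpow_neg hs0.le, neg_sub, neg_sub, hsplit]
  set a := s ^ (1 / p - 1)
  set c := s ^ (1 - 1 / q)
  have ha : 0 ≤ a := Real.rpow_nonneg hs0.le _
  have h1ρ : 0 < 1 - ρ := by linarith
  calc n2p ω p (z - x)
      ≤ ((1 + ρ) ^ 2 * a * (n21 ω z - n21 ω x + 2 * sigmaS ω s x)
          + τ * (3 + ρ) * (a * c) * l2 (A.mulVec (z - x))) / (1 - ρ) := by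
        rw [le_div_iff₀ h1ρ]
        linarith [mul_le_mul_of_nonneg_left hℓp h1ρ.le,
          mul_le_mul_of_nonneg_left hℓ1 (by positivity : 0 ≤ (1 + ρ) * a)]
    _ = _ := by field_simp

theorem stmt4 {m : ℕ} (A : Matrix (Fin m) ((b : Fin B) × Fin (d b)) ℝ)
    (ω : Fin B → ℝ) (hω : ∀ b, 1 ≤ ω b) (s ρ τ p q : ℝ)
    (hρ0 : 0 < ρ) (hρ1 : ρ < 1) (hτ : 0 < τ)
    (hp : 1 ≤ p) (hpq : p ≤ q) (hq2 : q ≤ 2)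
    (hs : ∀ b, ω b ^ 2 ≤ s)
    (hNSP : ∀ (v : ((b : Fin B) × Fin (d b)) → ℝ) (S : Finset (Fin B)), wCard ω S ≤ s →
      n2p ω q (rs S v) ≤ ρ / s ^ (1 - 1 / q) * n21 ω (rs Sᶜ v) + τ * l2 (A.mulVec v))
    (x z : ((b : Fin B) × Fin (d b)) → ℝ) :
    n2p ω p (z - x) ≤
      ((1 + ρ) ^ 2 / (1 - ρ)) / s ^ (1 - 1 / p) *
          (n21 ω z - n21 ω x + 2 * sigmaS ω s x)
        + (τ * (3 + ρ) / (1 - ρ)) / s ^ (1 / q - 1 / p) * l2 (A.mulVec (z - x)) :=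
  stmt4_general A ω hω s ρ τ p q hρ0 hρ1 hp hpq hs hNSP x z
end
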